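/- arXiv:2510.13179 — 5 statements merged into one kernel-verified Lean document; each statement's English description precedes it below -/
import Mathlib

section
/- As β → α, the LNRE RE^{LN}_{α,β}(g,f) converges to (∫ g^α log(g/f))/(∫ g^α) + (1/α) log((∫ f^α)/(∫ g^α)), assuming differentiability under the integral sign of β ↦ ∫ g^β f^{α−β} at β = α. -/
open MeasureTheory

/-- As β → α, the LNRE converges to the stated limiting divergence, assuming
differentiability under the integral sign of β ↦ ∫ g^β f^(α−β) at β = α. -/
theorem lnre_tendsto_beta_to_alpha (S : Set ℝ) (g f : ℝ → ℝ) (α : ℝ) (hα : 0 < α)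
    (hgpos : 0 < ∫ y in S, g y ^ α) (hfpos : 0 < ∫ y in S, f y ^ α)
    (hD : HasDerivAt (fun β : ℝ => ∫ y in S, g y ^ β * f y ^ (α - β))
      (∫ y in S, g y ^ α * Real.log (g y / f y)) α) :
    Filter.Tendsto
      (fun β : ℝ =>
        (α / (β * (β - α))) * Real.log (∫ y in S, g y ^ β * f y ^ (α - β))
          - (1 / (β - α)) * Real.log (∫ y in S, g y ^ α)
          + (1 / β) * Real.log (∫ y in S, f y ^ α))
      (nhdsWithin α {α}ᶜ)
      (nhds ((∫ y in S, g y ^ α * Real.log (g y / f y)) / (∫ y in S, g y ^ α)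
        + (1 / α) * Real.log ((∫ y in S, f y ^ α) / (∫ y in S, g y ^ α)))) := by
  set G := ∫ y in S, g y ^ α with hGdef
  set F := ∫ y in S, f y ^ α with hFdef
  set D := ∫ y in S, g y ^ α * Real.log (g y / f y) with hDdef
  set I : ℝ → ℝ := fun β => ∫ y in S, g y ^ β * f y ^ (α - β) with hIdef
  have hIα : I α = G := by
    simp [hIdef, hGdef, Real.rpow_zero]
  have hG0 : G ≠ 0 := hgpos.ne'
  have hF0 : F ≠ 0 := hfpos.ne'
  have hL : HasDerivAt (fun β : ℝ => Real.log (I β)) (D / G) α := by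
    have := hD.log (by rw [hIα] at *; exact hG0)
    simpa [hIα] using this
  have hslope := hasDerivAt_iff_tendsto_slope.mp hL
  have hcoef : Filter.Tendsto (fun β : ℝ => α / β) (nhdsWithin α {α}ᶜ)
      (nhds 1) := by
    have : Filter.Tendsto (fun β : ℝ => α / β) (nhds α) (nhds (α / α)) :=
      tendsto_const_nhds.div Filter.tendsto_id hα.ne'
    rw [div_self hα.ne'] at this
    exact this.mono_left nhdsWithin_le_nhds
  have hinv : Filter.Tendsto (fun β : ℝ => 1 / β) (nhdsWithin α {α}ᶜ)
      (nhds (1 / α)) := by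
    exact (tendsto_const_nhds.div Filter.tendsto_id hα.ne').mono_left nhdsWithin_le_nhds
  have hlim : Filter.Tendsto
      (fun β : ℝ => (α / β) * slope (fun β => Real.log (I β)) α β
        + (1 / β) * (Real.log F - Real.log G))
      (nhdsWithin α {α}ᶜ)
      (nhds (1 * (D / G) + (1 / α) * (Real.log F - Real.log G))) :=
    (hcoef.mul hslope).add (hinv.mul tendsto_const_nhds)
  have hfinal : 1 * (D / G) + (1 / α) * (Real.log F - Real.log G)
      = D / G + (1 / α) * Real.log (F / G) := by
    rw [Real.log_div hF0 hG0, one_mul]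
  rw [hfinal] at hlim
  refine hlim.congr' ?_
  have h1 : ∀ᶠ β : ℝ in nhdsWithin α {α}ᶜ, β ≠ 0 :=
    (eventually_ne_nhds hα.ne').filter_mono nhdsWithin_le_nhds
  have h2 : ∀ᶠ β : ℝ in nhdsWithin α {α}ᶜ, β ≠ α := by
    filter_upwards [self_mem_nhdsWithin] with β hβ
    simpa using hβ
  filter_upwards [h1, h2] with β hβ0 hβα
  have hβα' : β - α ≠ 0 := sub_ne_zero.mpr hβα
  rw [slope_def_field, hIα]
  field_simp
  ring
end

section
/- Let P = { f_λ } be a k-parameter M^{(α,β)}-family, i.e. f_λ(y) = N(λ)[h(y) + w(λ)ᵀ f(y)]^{1/(α−β)} on common support S. Define the generalized likelihood L(y₁ⁿ; λ) = (1/(α−β)) log( (1/n) Σⱼ ĝ(yⱼ)^{β−1} f_λ(yⱼ)^{α−β} ) − (1/α) log ∫ f_λ^α. If two samples r₁ⁿ, s₁ⁿ satisfy f̄ᵢ(r₁ⁿ)/h̄(r₁ⁿ) = f̄ᵢ(s₁ⁿ)/h̄(s₁ⁿ) for all i = 1,…,d, where f̄ᵢ(y₁ⁿ) = (1/n) Σⱼ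 ĝ(yⱼ)^{β−1} fᵢ(yⱼ) and h̄(y₁ⁿ) = (1/n) Σⱼ ĝ(yⱼ)^{β−1} h(yⱼ), then L(r₁ⁿ; λ) − L(s₁ⁿ; λ) = (1/(α−β)) log( h̄(r₁ⁿ)/h̄(s₁ⁿ) ), which is independent of λ. -/
open MeasureTheory

/-- In an M^(α,β)-family, if two samples have the same sufficient-statistic values
f̄ᵢ/h̄, then the difference of the generalized LNRE likelihoods equals
(1/(α−β)) log(h̄(r)/h̄(s)), which is independent of λ. -/
theorem M_alpha_beta_sufficiency {n d : ℕ} {Λ : Type*} (hn : 0 < n)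
    (α β : ℝ) (hαβ : α ≠ β)
    (N : Λ → ℝ) (hN : ∀ l, 0 < N l)
    (ghat h : ℝ → ℝ) (hghat : ∀ y, 0 < ghat y)
    (fv : Fin d → ℝ → ℝ) (w : Λ → Fin d → ℝ)
    (hbracket : ∀ (l : Λ) (y : ℝ), 0 < h y + ∑ i, w l i * fv i y)
    (r s : Fin n → ℝ)
    (hr : 0 < (1 / (n:ℝ)) * ∑ j, ghat (r j) ^ (β - 1) * h (r j))
    (hs : 0 < (1 / (n:ℝ)) * ∑ j, ghat (s j) ^ (β - 1) * h (s j))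
    (hratio : ∀ i : Fin d,
      ((1 / (n:ℝ)) * ∑ j, ghat (r j) ^ (β - 1) * fv i (r j)) /
        ((1 / (n:ℝ)) * ∑ j, ghat (r j) ^ (β - 1) * h (r j))
      = ((1 / (n:ℝ)) * ∑ j, ghat (s j) ^ (β - 1) * fv i (s j)) /
        ((1 / (n:ℝ)) * ∑ j, ghat (s j) ^ (β - 1) * h (s j))) :
    ∀ l : Λ,
      ((1 / (α - β)) * Real.log ((1 / (n:ℝ)) * ∑ j,
          ghat (r j) ^ (β - 1) *
            (N l * (h (r j) + ∑ i, w l i * fv i (r j)) ^ ((1:ℝ) / (α - β))) ^ (α - β))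
        - (1 / α) * Real.log (∫ y : ℝ,
            (N l * (h y + ∑ i, w l i * fv i y) ^ ((1:ℝ) / (α - β))) ^ α))
      - ((1 / (α - β)) * Real.log ((1 / (n:ℝ)) * ∑ j,
          ghat (s j) ^ (β - 1) *
            (N l * (h (s j) + ∑ i, w l i * fv i (s j)) ^ ((1:ℝ) / (α - β))) ^ (α - β))
        - (1 / α) * Real.log (∫ y : ℝ,
            (N l * (h y + ∑ i, w l i * fv i y) ^ ((1:ℝ) / (α - β))) ^ α))
      = (1 / (α - β)) *
          Real.log (((1 / (n:ℝ)) * ∑ j, ghat (r j) ^ (β - 1) * h (r j)) /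
            ((1 / (n:ℝ)) * ∑ j, ghat (s j) ^ (β - 1) * h (s j))) := by
  intro l
  have hαβ' : α - β ≠ 0 := sub_ne_zero.mpr (fun hc => hαβ hc)
  have hterm : ∀ y : ℝ, ghat y ^ (β - 1) *
      (N l * (h y + ∑ i, w l i * fv i y) ^ ((1:ℝ) / (α - β))) ^ (α - β)
      = N l ^ (α - β) * (ghat y ^ (β - 1) * (h y + ∑ i, w l i * fv i y)) := by
    intro y
    rw [Real.mul_rpow (hN l).le (Real.rpow_nonneg (hbracket l y).le _),
      ← Real.rpow_mul (hbracket l y).le, one_div_mul_cancel hαβ', Real.rpow_one]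
    ring
  have key : ∀ y : Fin n → ℝ,
      (1 / (n:ℝ)) * ∑ j, ghat (y j) ^ (β - 1) * (h (y j) + ∑ i, w l i * fv i (y j))
      = ((1 / (n:ℝ)) * ∑ j, ghat (y j) ^ (β - 1) * h (y j)) +
        ∑ i, w l i * ((1 / (n:ℝ)) * ∑ j, ghat (y j) ^ (β - 1) * fv i (y j)) := by
    intro y
    simp only [mul_add, Finset.sum_add_distrib, Finset.mul_sum]
    rw [Finset.sum_comm]
    congr 1
    exact Finset.sum_congr rfl (fun i _ => Finset.sum_congr rfl (fun j _ => by ring))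
  set Hr := (1 / (n:ℝ)) * ∑ j, ghat (r j) ^ (β - 1) * h (r j) with hHr
  set Hs := (1 / (n:ℝ)) * ∑ j, ghat (s j) ^ (β - 1) * h (s j) with hHs
  set Fr : Fin d → ℝ := fun i => (1 / (n:ℝ)) * ∑ j, ghat (r j) ^ (β - 1) * fv i (r j)
  set Fs : Fin d → ℝ := fun i => (1 / (n:ℝ)) * ∑ j, ghat (s j) ^ (β - 1) * fv i (s j)
  have hFr : ∀ i, Fr i = (Hr / Hs) * Fs i := by
    intro i
    have h2 : Fr i * Hs = Fs i * Hr := (div_eq_div_iff hr.ne' hs.ne').mp (hratio i)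
    field_simp
    linear_combination h2
  set As := Hs + ∑ i, w l i * Fs i with hAs
  have hAspos : 0 < As := by
    have : As = (1 / (n:ℝ)) * ∑ j, ghat (s j) ^ (β - 1) * (h (s j) + ∑ i, w l i * fv i (s j)) := (key s).symm
    rw [this]
    apply mul_pos (by positivity)
    apply Finset.sum_pos (fun j _ => mul_pos (Real.rpow_pos_of_pos (hghat _) _) (hbracket l _))
    exact Finset.univ_nonempty_iff.mpr ⟨⟨0, hn⟩⟩
  have hAr : Hr + ∑ i, w l i * Fr i = (Hr / Hs) * As := by
    rw [hAs, mul_add]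
    congr 1
    · field_simp
    · rw [Finset.mul_sum]
      exact Finset.sum_congr rfl (fun i _ => by rw [hFr i]; ring)
  have hK : (0:ℝ) < N l ^ (α - β) := Real.rpow_pos_of_pos (hN l) _
  have hc : (0:ℝ) < Hr / Hs := div_pos hr hs
  have hsr : (1 / (n:ℝ)) * ∑ j, ghat (r j) ^ (β - 1) *
      (N l * (h (r j) + ∑ i, w l i * fv i (r j)) ^ ((1:ℝ) / (α - β))) ^ (α - β)
      = N l ^ (α - β) * ((Hr / Hs) * As) := by
    simp only [hterm]
    rw [← Finset.mul_sum, mul_left_comm, key r, hAr]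
  have hss : (1 / (n:ℝ)) * ∑ j, ghat (s j) ^ (β - 1) *
      (N l * (h (s j) + ∑ i, w l i * fv i (s j)) ^ ((1:ℝ) / (α - β))) ^ (α - β)
      = N l ^ (α - β) * As := by
    simp only [hterm]
    rw [← Finset.mul_sum, mul_left_comm, key s, hAs]
  rw [hsr, hss]
  rw [Real.log_mul hK.ne' (mul_pos hc hAspos).ne', Real.log_mul hc.ne' hAspos.ne',
    Real.log_mul hK.ne' hAspos.ne']
  ring
end

section
/- In a regular M^{(α,β)}-family, the statistic T = f̄/h̄ is minimal sufficient with respect to the generalized LNRE likelihood: if for two samples r₁ⁿ, s₁ⁿ the difference L(r₁ⁿ;λ) − L(s₁ⁿ;λ) = (1/(α−β))[ log(h̄(r₁ⁿ)/h̄(s₁ⁿ)) + log((1 + w(λ)ᵀ f̄(r₁ⁿ)/h̄(r₁ⁿ))/(1 + w(λ)ᵀ f̄(s₁ⁿ)/h̄(s₁ⁿ))) ] is constant in λ, and the functions 1, w₁, …, w_d are linearly independent, then f̄(r₁ⁿ)/h̄(r₁ⁿ) = f̄(s₁ⁿ)/h̄(s₁ⁿ). -/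
/-- Minimal sufficiency of f̄/h̄ in a regular M^(α,β)-family: if the likelihood
difference is constant in λ and 1, w₁, …, w_d are linearly independent, then the
sufficient-statistic values of the two samples agree. -/
theorem M_alpha_beta_minimal_sufficiency {n d : ℕ} {Λ : Type*} (α β : ℝ) (hαβ : α ≠ β)
    (ghat h : ℝ → ℝ) (fv : Fin d → ℝ → ℝ) (w : Λ → Fin d → ℝ)
    (hli : LinearIndependent ℝ
      (Fin.cons (fun _ : Λ => (1:ℝ)) (fun i l => w l i) : Fin (d + 1) → Λ → ℝ))
    (r s : Fin n → ℝ)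
    (hr : 0 < ∑ j, ghat (r j) ^ (β - 1) * h (r j))
    (hs : 0 < ∑ j, ghat (s j) ^ (β - 1) * h (s j))
    (hposr : ∀ l : Λ, 0 < 1 + ∑ i, w l i *
      ((∑ j, ghat (r j) ^ (β - 1) * fv i (r j)) / (∑ j, ghat (r j) ^ (β - 1) * h (r j))))
    (hposs : ∀ l : Λ, 0 < 1 + ∑ i, w l i *
      ((∑ j, ghat (s j) ^ (β - 1) * fv i (s j)) / (∑ j, ghat (s j) ^ (β - 1) * h (s j))))
    (hconst : ∃ c : ℝ, ∀ l : Λ,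
      (1 / (α - β)) *
        (Real.log ((∑ j, ghat (r j) ^ (β - 1) * h (r j)) /
            (∑ j, ghat (s j) ^ (β - 1) * h (s j)))
          + Real.log ((1 + ∑ i, w l i *
              ((∑ j, ghat (r j) ^ (β - 1) * fv i (r j)) /
                (∑ j, ghat (r j) ^ (β - 1) * h (r j)))) /
            (1 + ∑ i, w l i *
              ((∑ j, ghat (s j) ^ (β - 1) * fv i (s j)) /
                (∑ j, ghat (s j) ^ (β - 1) * h (s j))))))
        = c) :
    ∀ i : Fin d,
      (∑ j, ghat (r j) ^ (β - 1) * fv i (r j)) / (∑ j, ghat (r j) ^ (β - 1) * h (r j))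
      = (∑ j, ghat (s j) ^ (β - 1) * fv i (s j)) / (∑ j, ghat (s j) ^ (β - 1) * h (s j)) := by

  obtain ⟨c, hc⟩ := hconst
  set Tr : Fin d → ℝ := fun i =>
    (∑ j, ghat (r j) ^ (β - 1) * fv i (r j)) / (∑ j, ghat (r j) ^ (β - 1) * h (r j)) with hTr
  set Ts : Fin d → ℝ := fun i =>
    (∑ j, ghat (s j) ^ (β - 1) * fv i (s j)) / (∑ j, ghat (s j) ^ (β - 1) * h (s j)) with hTs
  have hne : (α - β) ≠ 0 := sub_ne_zero.mpr hαβ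
  set A : ℝ := Real.log ((∑ j, ghat (r j) ^ (β - 1) * h (r j)) /
      (∑ j, ghat (s j) ^ (β - 1) * h (s j))) with hA
  -- the log ratio is constant
  have hlog : ∀ l : Λ, Real.log ((1 + ∑ i, w l i * Tr i) / (1 + ∑ i, w l i * Ts i))
      = c * (α - β) - A := by
    intro l
    have e := hc l
    rw [one_div, inv_mul_eq_div, div_eq_iff hne] at e
    linarith [e]
  set k : ℝ := Real.exp (c * (α - β) - A) with hk
  have hratio : ∀ l : Λ, 1 + ∑ i, w l i * Tr i = k * (1 + ∑ i, w l i * Ts i) := by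
    intro l
    have h1 := hposr l
    have h2 := hposs l
    have hpos : 0 < (1 + ∑ i, w l i * Tr i) / (1 + ∑ i, w l i * Ts i) := div_pos h1 h2
    have := Real.exp_log hpos
    rw [hlog l] at this
    have heq : (1 + ∑ i, w l i * Tr i) / (1 + ∑ i, w l i * Ts i) = k := by rw [← this, hk]
    rw [div_eq_iff (ne_of_gt h2)] at heq
    linarith [heq]
  -- build vanishing linear combination
  have hcomb : ∀ l : Λ, (1 - k) * 1 + ∑ i, (Tr i - k * Ts i) * w l i = 0 := by
    intro l
    have := hratio l
    have hsum : ∑ i, (Tr i - k * Ts i) * w l i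
        = (∑ i, w l i * Tr i) - k * ∑ i, w l i * Ts i := by
      rw [Finset.mul_sum, ← Finset.sum_sub_distrib]
      congr 1; ext i; ring
    rw [hsum]; linarith [this]
  have hli' := Fintype.linearIndependent_iff.mp hli
  have hzero := hli' (Fin.cons (1 - k) (fun i => Tr i - k * Ts i)) ?_
  · have hk1 : (1 : ℝ) - k = 0 := by simpa using hzero 0
    have hkeq : k = 1 := by linarith
    intro i
    have := hzero i.succ
    simp [Fin.cons_succ, hkeq] at this
    show Tr i = Ts i
    linarith [this]
  · funext l
    have := hcomb l
    simp only [Finset.sum_apply, Pi.smul_apply, smul_eq_mul]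
    rw [Fin.sum_univ_succ]
    simp only [Fin.cons_zero, Fin.cons_succ]
    simpa using this
end

section
/- Evaluation of the ratio of integrals C₁ = (∫_{−∞}^{∞} (t²−1)/(ν+t²)^{(ν+1)β/2} dt) / (∫_{−∞}^{∞} 1/(ν+t²)^{(ν+1)β/2 − 1} dt) equals 1 − ((ν+1)/ν)·(((ν+1)β/2 − 3/2)/((ν+1)β/2 − 1)), provided β > 3/(ν+1) and ν > 0 so that both integrals converge. -/
/-!
With `p = (ν + 1) β / 2` and `s = 1 - p < -1/2`, the function `t (ν + t²)^s` vanishes at `±∞`, and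
integrating its derivative over `ℝ` gives `(1 + 2s) ∫ (ν + t²)^s = 2sν ∫ (ν + t²)^(s-1)`.
Splitting `t² - 1 = (ν + t²) - (ν + 1)` writes the numerator through the same two integrals.
-/

open MeasureTheory Real Filter Topology

section AddSqRpow

variable {ν : ℝ}

lemma integrable_add_sq_rpow (hν : 0 < ν) {s : ℝ} (hs : s < -(1 / 2)) :
    Integrable fun t : ℝ ↦ (ν + t ^ 2) ^ s := by
  -- `ν + t² = ν (1 + (t / √ν)²)` reduces to the Japanese bracket
  have hbracket : Integrable fun t : ℝ ↦ (1 + ‖t‖ ^ 2) ^ (-(-2 * s) / 2) :=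
    integrable_rpow_neg_one_add_norm_sq (by simp; linarith)
  refine ((hbracket.comp_div (sqrt_pos.2 hν).ne').const_mul (ν ^ s)).congr
    (Eventually.of_forall fun t ↦ ?_)
  simp only [norm_div, Real.norm_eq_abs, div_pow, sq_abs,
    sq_sqrt hν.le, show -(-2 * s) / 2 = s by ring]
  rw [← mul_rpow hν.le (by positivity), mul_add, mul_one, mul_div_cancel₀ _ hν.ne']

lemma integral_add_sq_rpow_pos (hν : 0 < ν) {s : ℝ} (hs : s < -(1 / 2)) :
    0 < ∫ t : ℝ, (ν + t ^ 2) ^ s :=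
  integral_pos_of_integrable_nonneg_nonzero (x := 0)
    ((continuous_const.add (continuous_pow 2)).rpow_const
      fun t ↦ Or.inl (by positivity : 0 < ν + t ^ 2).ne')
    (integrable_add_sq_rpow hν hs) (fun t ↦ by positivity)
    (rpow_pos_of_pos (by positivity) s).ne'

lemma tendsto_mul_add_sq_rpow_cocompact (hν : 0 < ν) {s : ℝ} (hs : s < -(1 / 2)) :
    Tendsto (fun t : ℝ ↦ t * (ν + t ^ 2) ^ s) (cocompact ℝ) (𝓝 0) := by
  have hbase : Tendsto (fun t : ℝ ↦ ν + t ^ 2) (cocompact ℝ) atTop := by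
    refine tendsto_atTop_add_const_left _ _ <| ((tendsto_pow_atTop two_ne_zero).comp
      tendsto_norm_cocompact_atTop).congr fun t ↦ ?_
    simp
  have hdecay : Tendsto (fun t : ℝ ↦ (ν + t ^ 2) ^ (s + 1 / 2)) (cocompact ℝ) (𝓝 0) := by
    simpa only [Function.comp_def, neg_neg] using
      (tendsto_rpow_neg_atTop (y := -(s + 1 / 2)) (by linarith)).comp hbase
  refine squeeze_zero_norm (fun t ↦ ?_) hdecay
  have hpos : 0 < ν + t ^ 2 := by positivity
  calc ‖t * (ν + t ^ 2) ^ s‖ = |t| * (ν + t ^ 2) ^ s := by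
        rw [norm_mul, Real.norm_eq_abs, Real.norm_of_nonneg (by positivity)]
    _ ≤ √(ν + t ^ 2) * (ν + t ^ 2) ^ s := by gcongr; exact abs_le_sqrt (by linarith)
    _ = (ν + t ^ 2) ^ (s + 1 / 2) := by rw [sqrt_eq_rpow, ← rpow_add hpos, add_comm (1 / 2)]

lemma hasDerivAt_mul_add_sq_rpow (hν : 0 < ν) (s x : ℝ) :
    HasDerivAt (fun t : ℝ ↦ t * (ν + t ^ 2) ^ s)
      ((1 + 2 * s) * (ν + x ^ 2) ^ s - 2 * s * ν * (ν + x ^ 2) ^ (s - 1)) x := by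
  have hpos : 0 < ν + x ^ 2 := by positivity
  have hbase : HasDerivAt (fun t : ℝ ↦ ν + t ^ 2) (2 * x) x := by
    simpa using (hasDerivAt_pow 2 x).const_add ν
  refine ((hasDerivAt_id x).mul (hbase.rpow_const (p := s) (Or.inl hpos.ne'))).congr_deriv ?_
  rw [rpow_sub_one hpos.ne', id]
  field_simp
  ring

theorem integral_add_sq_rpow_recurrence (hν : 0 < ν) {s : ℝ} (hs : s < -(1 / 2)) :
    (1 + 2 * s) * ∫ t : ℝ, (ν + t ^ 2) ^ s = 2 * s * ν * ∫ t : ℝ, (ν + t ^ 2) ^ (s - 1) := by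
  have hI := integrable_add_sq_rpow hν hs
  have hJ := integrable_add_sq_rpow hν (s := s - 1) (by linarith)
  have hboundary := tendsto_mul_add_sq_rpow_cocompact hν hs
  have hFTC := integral_of_hasDerivAt_of_tendsto (hasDerivAt_mul_add_sq_rpow hν s)
    ((hI.const_mul _).sub (hJ.const_mul _))
    (hboundary.mono_left atBot_le_cocompact) (hboundary.mono_left atTop_le_cocompact)
  rw [integral_sub (hI.const_mul _) (hJ.const_mul _), integral_const_mul, integral_const_mul,
    sub_zero] at hFTC
  linarith

theorem integral_sq_sub_one_div_add_sq_rpow_div (hν : 0 < ν) {p : ℝ} (hp : 3 / 2 < p) :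
    (∫ t : ℝ, (t ^ 2 - 1) / (ν + t ^ 2) ^ p) / (∫ t : ℝ, 1 / (ν + t ^ 2) ^ (p - 1))
      = 1 - ((ν + 1) / ν) * ((p - 3 / 2) / (p - 1)) := by
  have hpos : ∀ t : ℝ, 0 < ν + t ^ 2 := fun t ↦ by positivity
  have hnum : ∀ t : ℝ, (t ^ 2 - 1) / (ν + t ^ 2) ^ p
      = (ν + t ^ 2) ^ (1 - p) - (ν + 1) * (ν + t ^ 2) ^ (1 - p - 1) := fun t ↦ by
    rw [rpow_sub_one (hpos t).ne', rpow_sub (hpos t), rpow_one]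
    field_simp [(hpos t).ne']
    ring
  have hden : ∀ t : ℝ, 1 / (ν + t ^ 2) ^ (p - 1) = (ν + t ^ 2) ^ (1 - p) := fun t ↦ by
    rw [one_div, ← rpow_neg (hpos t).le, neg_sub]
  simp_rw [hnum, hden]
  rw [integral_sub (integrable_add_sq_rpow hν (by linarith))
    ((integrable_add_sq_rpow hν (by linarith)).const_mul _), integral_const_mul,
    div_eq_iff (integral_add_sq_rpow_pos hν (by linarith)).ne']
  have hrec := integral_add_sq_rpow_recurrence hν (s := 1 - p) (by linarith)
  generalize (∫ t : ℝ, (ν + t ^ 2) ^ (1 - p)) = I at *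
  generalize (∫ t : ℝ, (ν + t ^ 2) ^ (1 - p - 1)) = J at *
  have hp1 : p - 1 ≠ 0 := by linarith
  have hJ : J = (p - 3 / 2) / ((p - 1) * ν) * I := by
    field_simp
    linear_combination hrec
  rw [hJ]
  field_simp

end AddSqRpow

/-- Evaluation of the ratio of integrals C₁ appearing in the LNRE estimating
equation for the Student's t scale parameter. -/
theorem C1_integral_ratio (ν β : ℝ) (hν : 0 < ν) (hβ : 3 / (ν + 1) < β) :
    (∫ t : ℝ, (t ^ 2 - 1) / (ν + t ^ 2) ^ ((ν + 1) * β / 2)) /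
      (∫ t : ℝ, 1 / (ν + t ^ 2) ^ ((ν + 1) * β / 2 - 1))
    = 1 - ((ν + 1) / ν) * (((ν + 1) * β / 2 - 3 / 2) / ((ν + 1) * β / 2 - 1)) := by
  refine integral_sq_sub_one_div_add_sq_rpow_div hν ?_
  rw [div_lt_iff₀ (by linarith)] at hβ
  linarith
end

section
/- Given data points y₁,…,y_m and positive weights wⱼ, the function ℓ(v) = Σ_{j=1}^m wⱼ · v^{−1/(2(1+β))} · (1 − yⱼ²/(3v)) of v > 0 (with β > −1) is increasing for v ≤ v* and decreasing for v ≥ v*, where v* = ((3+2β)/3)·(Σⱼ wⱼ yⱼ²)/(Σⱼ wⱼ). Hence on a closed subinterval [L,U] ⊂ (0,∞), ℓ is maximized at the median of {L, U, v*}. -/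
/-!
With `α = 1/(2(1+β))`, `A = Σ wⱼ` and `S = Σ wⱼ yⱼ²`, the likelihood is
`ℓ v = A v^(-α) - (S/3) v^(-α-1)` on `(0, ∞)`, whose derivative
`v^(-α-2) ((S/3)(α+1) - A α v)` changes sign exactly once, at `v* = (S/3)(α+1)/(A α)`.
A function increasing up to `v*` and decreasing after it is maximized on `[L, U]` at the
point of `[L, U]` closest to `v*`.
-/

open Set

theorem le_apply_median_of_monotoneOn_of_antitoneOn {α β : Type*} [LinearOrder α] [Preorder β]
    {f : α → β} {a p L U x : α} (hmono : MonotoneOn f (Ioc a p)) (hanti : AntitoneOn f (Ici p))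
    (hL : a < L) (hx : x ∈ Icc L U) :
    f x ≤ f (if p ≤ L then L else if U ≤ p then U else p) := by
  have hax : a < x := hL.trans_le hx.1
  split_ifs with hpL hUp
  · exact hanti hpL (hpL.trans hx.1) hx.1
  · exact hmono ⟨hax, hx.2.trans hUp⟩ ⟨hax.trans_le hx.2, hUp⟩ hx.2
  · rcases le_total x p with hxp | hpx
    · exact hmono ⟨hax, hxp⟩ ⟨hL.trans (not_le.1 hpL), le_rfl⟩ hxp
    · exact hanti le_rfl hpx hpx

noncomputable def scaleProfile (A C α v : ℝ) : ℝ := A * v ^ (-α) - C * v ^ (-α - 1)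

section scaleProfile

variable {A C α p v : ℝ}

theorem hasDerivAt_scaleProfile (A C α : ℝ) (hv : 0 < v) :
    HasDerivAt (scaleProfile A C α) (v ^ (-α - 2) * (C * (α + 1) - A * α * v)) v := by
  have hpow (γ : ℝ) : HasDerivAt (fun v : ℝ => v ^ γ) (γ * v ^ (γ - 1)) v :=
    Real.hasDerivAt_rpow_const (Or.inl hv.ne')
  refine (((hpow (-α)).const_mul A).sub ((hpow (-α - 1)).const_mul C)).congr_deriv ?_
  have h₁ : v ^ (-α - 1) = v ^ (-α - 2) * v := by
    rw [← Real.rpow_add_one hv.ne']; ring_nf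
  rw [h₁, show -α - 1 - 1 = -α - 2 by ring]
  ring

theorem continuousOn_scaleProfile (A C α : ℝ) : ContinuousOn (scaleProfile A C α) (Ioi 0) :=
  fun _ hv => (hasDerivAt_scaleProfile A C α hv).continuousAt.continuousWithinAt

theorem strictMonoOn_scaleProfile (hAα : 0 < A * α) (hp : A * α * p = C * (α + 1)) :
    StrictMonoOn (scaleProfile A C α) (Ioc 0 p) := by
  refine strictMonoOn_of_deriv_pos (convex_Ioc 0 p)
    ((continuousOn_scaleProfile A C α).mono Ioc_subset_Ioi_self) fun v hv => ?_
  rw [interior_Ioc] at hv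
  rw [(hasDerivAt_scaleProfile A C α hv.1).deriv, ← hp]
  have := Real.rpow_pos_of_pos hv.1 (-α - 2)
  have := mul_lt_mul_of_pos_left hv.2 hAα
  nlinarith

theorem strictAntiOn_scaleProfile (hAα : 0 < A * α) (hp : A * α * p = C * (α + 1))
    (hp₀ : 0 < p) : StrictAntiOn (scaleProfile A C α) (Ici p) := by
  refine strictAntiOn_of_deriv_neg (convex_Ici p)
    ((continuousOn_scaleProfile A C α).mono (Ici_subset_Ioi.2 hp₀)) fun v hv => ?_
  rw [interior_Ici] at hv
  have hv₀ : 0 < v := hp₀.trans hv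
  rw [(hasDerivAt_scaleProfile A C α hv₀).deriv, ← hp]
  have := Real.rpow_pos_of_pos hv₀ (-α - 2)
  have := mul_lt_mul_of_pos_left (mem_Ioi.1 hv) hAα
  nlinarith

end scaleProfile

theorem sum_mul_rpow_mul_one_sub_sq_div {ι : Type*} (s : Finset ι) (w y : ι → ℝ) (γ : ℝ)
    {v : ℝ} (hv : 0 < v) :
    ∑ j ∈ s, w j * v ^ γ * (1 - y j ^ 2 / (3 * v)) =
      scaleProfile (∑ j ∈ s, w j) ((∑ j ∈ s, w j * y j ^ 2) / 3) (-γ) v := by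
  rw [scaleProfile, neg_neg, Real.rpow_sub_one hv.ne', Finset.sum_mul, Finset.sum_div,
    Finset.sum_mul, ← Finset.sum_sub_distrib]
  refine Finset.sum_congr rfl fun j _ => ?_
  field_simp

theorem weighted_scale_max_general {m : ℕ} (y w : Fin m → ℝ)
    (hy : ∃ j, y j ≠ 0) (hw : ∀ j, 0 < w j) (β : ℝ) (hβ : -1 < β) :
    let ℓ : ℝ → ℝ := fun v =>
      ∑ j, w j * v ^ (-(1 / (2 * (1 + β)))) * (1 - (y j) ^ 2 / (3 * v))
    let vstar : ℝ := ((3 + 2 * β) / 3) * (∑ j, w j * (y j) ^ 2) / (∑ j, w j)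
    MonotoneOn ℓ (Set.Ioc 0 vstar) ∧ AntitoneOn ℓ (Set.Ici vstar) ∧
    ∀ L U : ℝ, 0 < L → L ≤ U → ∀ x ∈ Set.Icc L U,
      ℓ x ≤ ℓ (if vstar ≤ L then L else if U ≤ vstar then U else vstar) := by
  intro ℓ vstar
  obtain ⟨j₀, hj₀⟩ := hy
  set α : ℝ := 1 / (2 * (1 + β))
  set A : ℝ := ∑ j, w j
  set S : ℝ := ∑ j, w j * y j ^ 2
  have hβ₁ : 0 < 1 + β := by linarith
  have hA : 0 < A := Finset.sum_pos (fun j _ => hw j) ⟨j₀, Finset.mem_univ _⟩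
  have hAα : 0 < A * α := mul_pos hA (by positivity)
  have hS : 0 < S := Finset.sum_pos' (fun j _ => by have := hw j; positivity)
    ⟨j₀, Finset.mem_univ _, by have := hw j₀; positivity⟩
  have hpeak : A * α * vstar = S / 3 * (α + 1) := by
    change A * (1 / (2 * (1 + β))) * ((3 + 2 * β) / 3 * S / A) =
      S / 3 * (1 / (2 * (1 + β)) + 1)
    field_simp
    ring
  have hvstar : 0 < vstar := pos_of_mul_pos_right (hpeak ▸ by positivity) hAα.le
  have hℓ : EqOn (scaleProfile A (S / 3) α) ℓ (Ioi 0) := fun v hv =>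
    by simpa using (sum_mul_rpow_mul_one_sub_sq_div Finset.univ w y (-α) hv).symm
  have hmono : MonotoneOn ℓ (Ioc 0 vstar) :=
    (strictMonoOn_scaleProfile hAα hpeak).monotoneOn.congr (hℓ.mono Ioc_subset_Ioi_self)
  have hanti : AntitoneOn ℓ (Ici vstar) :=
    (strictAntiOn_scaleProfile hAα hpeak hvstar).antitoneOn.congr
      (hℓ.mono (Ici_subset_Ioi.2 hvstar))
  exact ⟨hmono, hanti, fun L U hL _ x hx =>
    le_apply_median_of_monotoneOn_of_antitoneOn hmono hanti hL hx⟩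

/-- The scale likelihood ℓ(v) = Σ wⱼ v^(−1/(2(1+β)))(1 − yⱼ²/(3v)) increases up to
v*, decreases after it, and on a closed subinterval of (0,∞) is maximized at the
median of {L, U, v*}. -/
theorem weighted_scale_max {m : ℕ} (hm : 0 < m) (y w : Fin m → ℝ)
    (hy : ∃ j, y j ≠ 0) (hw : ∀ j, 0 < w j) (β : ℝ) (hβ : -1 < β) :
    let ℓ : ℝ → ℝ := fun v =>
      ∑ j, w j * v ^ (-(1 / (2 * (1 + β)))) * (1 - (y j) ^ 2 / (3 * v))
    let vstar : ℝ := ((3 + 2 * β) / 3) * (∑ j, w j * (y j) ^ 2) / (∑ j, w j)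
    MonotoneOn ℓ (Set.Ioc 0 vstar) ∧ AntitoneOn ℓ (Set.Ici vstar) ∧
    ∀ L U : ℝ, 0 < L → L ≤ U → ∀ x ∈ Set.Icc L U,
      ℓ x ≤ ℓ (if vstar ≤ L then L else if U ≤ vstar then U else vstar) :=
  weighted_scale_max_general y w hy hw β hβ
end
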